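/- arXiv:2311.01115 — 2 statements merged into one kernel-verified Lean document; each statement's English description precedes it below -/
import Mathlib

section
/- Let T be the unique full binary tree satisfying Conditions I.1 and I.2 for an alternating position sequence with injective values, augmented with the special root and the Condition-II path decomposition, and let a = q_0, …, q_ℓ = b be a decomposition path whose values increase along the path, whose endpoint b is not the special root, and with position(a) < position(b). Then every interior node of the in-trail has position smaller than position(a), and listing the in-trail nodes a = u_0, u_1, …, u_j = b in increasing value, their positions satisfy u_0 > u_1 > … > u_{j−1}; and every interior node of the mid-trail has position greater than position(a), and listing the mid-trail nodes a = v_0, v_1, …, v_k = b in increasing value, their positions satisfy v_0 < v_1 < … < v_k. -/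
/-- A full binary tree with nodes labeled by `α`. -/
inductive FullBinTree (α : Type) : Type
  | leaf : α → FullBinTree α
  | node : FullBinTree α → α → FullBinTree α → FullBinTree α
  deriving DecidableEq

namespace FullBinTree

variable {α : Type}

/-- The in-order traversal of the tree. -/
def inorder : FullBinTree α → List α
  | leaf x => [x]
  | node l x r => inorder l ++ [x] ++ inorder r

def rootLabel : FullBinTree α → α
  | leaf x => x
  | node _ x _ => x

def leafList : FullBinTree α → List α
  | leaf x => [x]
  | node l _ r => leafList l ++ leafList r

def internalList : FullBinTree α → List α
  | leaf _ => []
  | node l x r => internalList l ++ [x] ++ internalList r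

/-- Condition I.2: values strictly increase along every edge from child to parent. -/
def ValOrdered (v : α → ℝ) : FullBinTree α → Prop
  | leaf _ => True
  | node l x r => v (rootLabel l) < v x ∧ v (rootLabel r) < v x ∧ ValOrdered v l ∧ ValOrdered v r

/-- `Sub s t` means `s` is a subtree of `t`. -/
inductive Sub : FullBinTree α → FullBinTree α → Prop
  | refl (t : FullBinTree α) : Sub t t
  | left {s l r : FullBinTree α} (x : α) : Sub s l → Sub s (node l x r)
  | right {s l r : FullBinTree α} (x : α) : Sub s r → Sub s (node l x r)

def IsParentOf (t : FullBinTree α) (p c : α) : Prop :=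
  ∃ l r, Sub (node l p r) t ∧ (rootLabel l = c ∨ rootLabel r = c)

def IsLeftChildOf (t : FullBinTree α) (p c : α) : Prop :=
  ∃ l r, Sub (node l p r) t ∧ rootLabel l = c

def IsRightChildOf (t : FullBinTree α) (p c : α) : Prop :=
  ∃ l r, Sub (node l p r) t ∧ rootLabel r = c

/-- Relabel the nodes of the tree. -/
def mapNodes {β : Type} (σ : α → β) : FullBinTree α → FullBinTree β
  | leaf x => leaf (σ x)
  | node l x r => node (mapNodes σ l) (σ x) (mapNodes σ r)

variable [DecidableEq α]

/-- The list of nodes on the path from the root down to `x` (for `x` a node of the tree). -/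
def pathTo : FullBinTree α → α → List α
  | leaf y, _ => [y]
  | node l y r, x =>
    if x = y then [y]
    else if x ∈ inorder l then y :: pathTo l x
    else y :: pathTo r x

/-- The subtree rooted at the node `x`. -/
def subtreeAt : FullBinTree α → α → FullBinTree α
  | leaf y, _ => leaf y
  | node l y r, x =>
    if x = y then node l y r
    else if x ∈ inorder l then subtreeAt l x
    else subtreeAt r x

/-- Condition II: the upper end `b(a)` of the path of the leaf `a`, i.e. the nearest
ancestor of `a` in whose subtree `a` does not have the smallest value; the result
`none` encodes the special root. -/
noncomputable def bOf (t : FullBinTree α) (v : α → ℝ) (a : α) : Option α :=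
  (((pathTo t a).dropLast).reverse).find?
    (fun b => (inorder (subtreeAt t b)).any (fun u => decide (v u < v a)))

/-- The edges `(child, parent)` of the Condition-II path of the leaf `a` in the
augmented tree; the parent `none` encodes the special root. -/
noncomputable def pathEdges (t : FullBinTree α) (v : α → ℝ) (a : α) : List (α × Option α) :=
  let rev := ((pathTo t a).dropLast).reverse
  match rev.findIdx?
      (fun b => (inorder (subtreeAt t b)).any (fun u => decide (v u < v a))) with
  | some k => ((a :: rev.take (k+1)).zip (rev.take (k+1))).map (fun cp => (cp.1, some cp.2))
  | none => ((a :: rev).zip rev).map (fun cp => (cp.1, some cp.2))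
      ++ [((a :: rev).getLast (List.cons_ne_nil _ _), none)]

end FullBinTree
namespace FullBinTree

variable {α : Type}

theorem Sub.trans' {s u t : FullBinTree α} (h1 : Sub s u) (h2 : Sub u t) : Sub s t := by
  induction h2 with
  | refl => exact h1
  | left x h ih => exact Sub.left x ih
  | right x h ih => exact Sub.right x ih

theorem inorder_sublist {s t : FullBinTree α} (h : Sub s t) :
    List.Sublist (inorder s) (inorder t) := by
  induction h with
  | refl => exact List.Sublist.refl _
  | left x h ih =>
      exact ih.trans ((List.sublist_append_left _ _).trans (List.sublist_append_left _ _))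
  | right x h ih =>
      exact ih.trans (List.sublist_append_right _ _)

theorem mem_inorder_of_sub {s t : FullBinTree α} {a : α} (h : Sub s t)
    (ha : a ∈ inorder s) : a ∈ inorder t := (inorder_sublist h).mem ha

theorem rootLabel_mem (s : FullBinTree α) : rootLabel s ∈ inorder s := by
  cases s <;> simp [inorder, rootLabel]

theorem pairwise_node {R : α → α → Prop} {l r : FullBinTree α} {x : α}
    (h : (inorder (node l x r)).Pairwise R) :
    (∀ a ∈ inorder l, R a x) ∧ (∀ b ∈ inorder r, R x b) := by
  rw [inorder, List.pairwise_append, List.pairwise_append] at h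
  refine ⟨fun a ha => ?_, fun b hb => ?_⟩
  · exact h.1.2.2 a ha x (by simp)
  · exact h.2.2 x (by simp) b hb

theorem sub_unique {t : FullBinTree α} (hnd : (inorder t).Nodup) :
    ∀ {s s' : FullBinTree α}, Sub s t → Sub s' t → rootLabel s = rootLabel s' → s = s' := by
  induction t with
  | leaf y =>
      intro s s' h h' he
      cases h; cases h'; rfl
  | node l x r ihl ihr =>
      intro s s' h h' he
      have hnd' := hnd
      rw [inorder, List.nodup_append, List.nodup_append] at hnd'
      obtain ⟨⟨hndl, -, hd1⟩, hndr, hd2⟩ := hnd'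
      have hxl : x ∉ inorder l := fun hx => hd1 x hx x (by simp) rfl
      have hxr : x ∉ inorder r := fun hx => hd2 x (by simp) x hx rfl
      have hlr : ∀ a, a ∈ inorder l → a ∈ inorder r → False := fun a h1 h2 =>
        hd2 a (by simp [h1]) a h2 rfl
      have hrx : rootLabel (node l x r) = x := rfl
      cases h with
      | refl =>
          cases h' with
          | refl => rfl
          | left y h' =>
              rw [hrx] at he
              exact absurd (mem_inorder_of_sub h' (he ▸ rootLabel_mem _)) hxl
          | right y h' =>
              rw [hrx] at he
              exact absurd (mem_inorder_of_sub h' (he ▸ rootLabel_mem _)) hxr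
      | left y h =>
          cases h' with
          | refl =>
              rw [hrx] at he
              exact absurd (mem_inorder_of_sub h (he ▸ rootLabel_mem _)) hxl
          | left y' h' => exact ihl hndl h h' he
          | right y' h' =>
              exact absurd (mem_inorder_of_sub h' (he ▸ rootLabel_mem _))
                (fun hm => hlr _ (mem_inorder_of_sub h (rootLabel_mem _)) hm)
      | right y h =>
          cases h' with
          | refl =>
              rw [hrx] at he
              exact absurd (mem_inorder_of_sub h (he ▸ rootLabel_mem _)) hxr
          | left y' h' =>
              exact absurd (mem_inorder_of_sub h' (he ▸ rootLabel_mem _))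
                (fun hm => hlr _ hm (mem_inorder_of_sub h (rootLabel_mem _)))
          | right y' h' => exact ihr hndr h h' he

end FullBinTree

open FullBinTree

/-- Let `q 0, …, q L` be a Condition-II decomposition path of the
unique tree satisfying Conditions I.1 and I.2 (with increasing values along the path,
whose upper end is not the special root, and with the position of the leaf `q 0`
smaller than the position of `q L`).  Then every interior node of the in-trail has
position smaller than the position of `q 0`; the in-trail nodes, listed by increasing
value, have strictly decreasing positions (apart from the last one, `q L`); every
interior node of the mid-trail has position larger than the position of `q 0`; and the
mid-trail nodes, listed by increasing value, have strictly increasing positions. -/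
theorem statement2 (n : ℕ) (v : Fin (2*n+1) → ℝ)
    (hinj : Function.Injective v)
    (halt : ∀ (i : ℕ) (hi : i < 2*n+1) (hi1 : i+1 < 2*n+1),
      (Even i → v ⟨i, hi⟩ < v ⟨i+1, hi1⟩) ∧ (¬ Even i → v ⟨i+1, hi1⟩ < v ⟨i, hi⟩))
    (t : FullBinTree (Fin (2*n+1)))
    (hI1 : inorder t = List.finRange (2*n+1))
    (hI2 : ValOrdered v t)
    (q : ℕ → Fin (2*n+1)) (L : ℕ) (hL : 1 ≤ L)
    (hleaf : q 0 ∈ leafList t)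
    (hchain : ∀ i < L, IsParentOf t (q (i+1)) (q i))
    (hval : ∀ i < L, v (q i) < v (q (i+1)))
    (hend : bOf t v (q 0) = some (q L))
    (hpos : q 0 < q L) :
    (∀ i, 0 < i → i < L → IsRightChildOf t (q i) (q (i-1)) → q i < q 0) ∧
    (∀ i j, (i = 0 ∨ (0 < i ∧ i < L ∧ IsRightChildOf t (q i) (q (i-1)))) →
            (j = 0 ∨ (0 < j ∧ j < L ∧ IsRightChildOf t (q j) (q (j-1)))) →
            i < j → q j < q i) ∧
    (∀ i, 0 < i → i < L → IsLeftChildOf t (q i) (q (i-1)) → q 0 < q i) ∧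
    (∀ i j, (i = 0 ∨ i = L ∨ (0 < i ∧ i < L ∧ IsLeftChildOf t (q i) (q (i-1)))) →
            (j = 0 ∨ j = L ∨ (0 < j ∧ j < L ∧ IsLeftChildOf t (q j) (q (j-1)))) →
            i < j → j ≤ L → q i < q j) := by
  have hpw : (inorder t).Pairwise (· < ·) := by
    rw [hI1]; exact List.pairwise_lt_finRange _
  have hnd : (inorder t).Nodup := hpw.imp ne_of_lt
  have key : ∀ j, j < L → ∀ i, i ≤ j →
      ∃ s, Sub s t ∧ rootLabel s = q j ∧ q i ∈ inorder s := by
    intro j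
    induction j with
    | zero =>
        intro hj i hi
        interval_cases i
        obtain ⟨l, r, hsub, hc⟩ := hchain 0 hj
        rcases hc with h | h
        · exact ⟨l, (Sub.left _ (Sub.refl l)).trans' hsub, h, h ▸ rootLabel_mem l⟩
        · exact ⟨r, (Sub.right _ (Sub.refl r)).trans' hsub, h, h ▸ rootLabel_mem r⟩
    | succ j ih =>
        intro hj i hi
        obtain ⟨l, r, hsub, hc⟩ := hchain j (by omega)
        rcases Nat.lt_or_ge i (j+1) with hij | hij
        · obtain ⟨s, hs, hrs, hmem⟩ := ih (by omega) i (by omega)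
          rcases hc with h | h
          · have he : s = l :=
              sub_unique hnd hs ((Sub.left _ (Sub.refl l)).trans' hsub) (by rw [hrs, h])
            exact ⟨node l (q (j+1)) r, hsub, rfl, by
              rw [inorder]; simp [he ▸ hmem]⟩
          · have he : s = r :=
              sub_unique hnd hs ((Sub.right _ (Sub.refl r)).trans' hsub) (by rw [hrs, h])
            exact ⟨node l (q (j+1)) r, hsub, rfl, by
              rw [inorder]; simp [he ▸ hmem]⟩
        · have hieq : i = j + 1 := by omega
          exact ⟨node l (q (j+1)) r, hsub, rfl, by rw [hieq, inorder]; simp⟩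
  have keyR : ∀ i j, i < j → j < L → IsRightChildOf t (q j) (q (j-1)) → q j < q i := by
    rintro i j hij hjL ⟨l, r, hsub, hr⟩
    obtain ⟨s, hs, hrs, hmem⟩ := key (j-1) (by omega) i (by omega)
    have he : s = r :=
      sub_unique hnd hs ((Sub.right _ (Sub.refl r)).trans' hsub) (by rw [hrs, hr])
    exact (pairwise_node (List.Pairwise.sublist (inorder_sublist hsub) hpw)).2 _ (he ▸ hmem)
  have keyL : ∀ i j, i < j → j < L → IsLeftChildOf t (q j) (q (j-1)) → q i < q j := by
    rintro i j hij hjL ⟨l, r, hsub, hl⟩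
    obtain ⟨s, hs, hrs, hmem⟩ := key (j-1) (by omega) i (by omega)
    have he : s = l :=
      sub_unique hnd hs ((Sub.left _ (Sub.refl l)).trans' hsub) (by rw [hrs, hl])
    exact (pairwise_node (List.Pairwise.sublist (inorder_sublist hsub) hpw)).1 _ (he ▸ hmem)
  have keyLend : ∀ i, i < L → q i < q L := by
    intro i hiL
    have hch := hchain (L-1) (by omega)
    have hL1 : L - 1 + 1 = L := by omega
    rw [hL1] at hch
    obtain ⟨l, r, hsub, hc⟩ := hch
    obtain ⟨s, hs, hrs, hmem⟩ := key (L-1) (by omega) i (by omega)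
    rcases hc with h | h
    · have he : s = l :=
        sub_unique hnd hs ((Sub.left _ (Sub.refl l)).trans' hsub) (by rw [hrs, h])
      exact (pairwise_node (List.Pairwise.sublist (inorder_sublist hsub) hpw)).1 _ (he ▸ hmem)
    · exfalso
      obtain ⟨s0, hs0, hrs0, hmem0⟩ := key (L-1) (by omega) 0 (by omega)
      have he : s0 = r :=
        sub_unique hnd hs0 ((Sub.right _ (Sub.refl r)).trans' hsub) (by rw [hrs0, h])
      have : q L < q 0 :=
        (pairwise_node (List.Pairwise.sublist (inorder_sublist hsub) hpw)).2 _ (he ▸ hmem0)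
      exact absurd hpos (not_lt.mpr this.le)
  refine ⟨fun i hi0 hiL hright => keyR 0 i hi0 hiL hright, ?_, ?_, ?_⟩
  · rintro i j hi hj hij
    rcases hj with rfl | ⟨hj0, hjL, hright⟩
    · omega
    · exact keyR i j hij hjL hright
  · exact fun i hi0 hiL hleft => keyL 0 i hi0 hiL hleft
  · rintro i j hi hj hij hjle
    rcases hj with rfl | rfl | ⟨hj0, hjL, hleft⟩
    · omega
    · exact keyLend i hij
    · exact keyL i j hij hjL hleft
end

section
/- Let c and c' be generic linear lists on the same items with c_1 < c_2 and c_{m−1} > c_m (and similarly for c') that agree except at a single item j, where j is an interior local maximum of both c and c'. If c'(j) is strictly greater than the values of both children of j in T(c) and, in case j is not the child of the special root, strictly smaller than the value of the parent of j in T(c), then T(c') = T(c): the two trees are identical, including identical Condition-II path decompositions. -/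
namespace FullBinTree

variable {α : Type}

variable [DecidableEq α]

set_option linter.unusedSectionVars false


lemma nodup_node {l r : FullBinTree α} {y : α} (h : (inorder (node l y r)).Nodup) :
    (inorder l).Nodup ∧ (inorder r).Nodup ∧ y ∉ inorder l ∧ y ∉ inorder r ∧
      ∀ x, x ∈ inorder l → x ∉ inorder r := by
  simp only [inorder, List.append_assoc, List.singleton_append, List.nodup_append,
    List.nodup_cons, List.Disjoint, List.mem_cons] at h
  obtain ⟨h1, ⟨h2, h3⟩, h4⟩ := h
  refine ⟨h1, h3, fun hy => h4 y hy y (Or.inl rfl) rfl, h2, fun x hx hx' => h4 x hx x (Or.inr hx') rfl⟩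

lemma rootLabel_mem_inorder (t : FullBinTree α) : rootLabel t ∈ inorder t := by
  cases t <;> simp [inorder, rootLabel]

lemma inorder_ne_nil (t : FullBinTree α) : inorder t ≠ [] := by
  cases t <;> simp [inorder]

lemma inorder_length_pos (t : FullBinTree α) : 0 < (inorder t).length :=
  List.length_pos_iff.mpr (inorder_ne_nil t)

lemma sub_inorder_sublist {s t : FullBinTree α} (h : Sub s t) :
    (inorder s).Sublist (inorder t) := by
  induction h with
  | refl => exact List.Sublist.refl _
  | left x h ih =>
      refine ih.trans ?_
      simp only [inorder, List.append_assoc]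
      exact List.sublist_append_left _ _
  | right x h ih =>
      refine ih.trans ?_
      simp only [inorder, List.append_assoc]
      exact (List.sublist_append_right _ _).trans (List.sublist_append_right _ _)

lemma Sub.trans'_s7 {a b c : FullBinTree α} (h1 : Sub a b) (h2 : Sub b c) : Sub a c := by
  induction h2 with
  | refl => exact h1
  | left x h ih => exact Sub.left x ih
  | right x h ih => exact Sub.right x ih

lemma sub_node_iff {s l r : FullBinTree α} {x : α} :
    Sub s (node l x r) ↔ s = node l x r ∨ Sub s l ∨ Sub s r := by
  constructor
  · intro h
    cases h with
    | refl => exact Or.inl rfl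
    | left _ h => exact Or.inr (Or.inl h)
    | right _ h => exact Or.inr (Or.inr h)
  · rintro (rfl | h | h)
    exacts [Sub.refl _, Sub.left _ h, Sub.right _ h]

lemma sub_leaf_iff {s : FullBinTree α} {x : α} : Sub s (leaf x) ↔ s = leaf x := by
  constructor
  · intro h; cases h; rfl
  · rintro rfl; exact Sub.refl _

lemma mem_internal_of_sub {s t : FullBinTree α} (h : Sub s t) :
    ∀ l x r, s = node l x r → x ∈ internalList t := by
  induction h with
  | refl =>
      rintro l x r rfl; simp [internalList]
  | left y h ih =>
      intro l x r hs
      simp only [internalList, List.append_assoc, List.mem_append]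
      exact Or.inl (ih l x r hs)
  | right y h ih =>
      intro l x r hs
      simp only [internalList, List.append_assoc, List.mem_append, List.mem_singleton]
      exact Or.inr (Or.inr (ih l x r hs))

lemma leafList_subset_inorder : ∀ (t : FullBinTree α), ∀ x ∈ leafList t, x ∈ inorder t := by
  intro t
  induction t with
  | leaf y => simp [leafList, inorder]
  | node l y r ihl ihr =>
      intro x hx
      simp only [leafList, List.mem_append] at hx
      simp only [inorder, List.append_assoc, List.mem_append, List.mem_singleton]
      rcases hx with h | h
      · exact Or.inl (ihl x h)
      · exact Or.inr (Or.inr (ihr x h))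

lemma internalList_subset_inorder : ∀ (t : FullBinTree α), ∀ x ∈ internalList t, x ∈ inorder t := by
  intro t
  induction t with
  | leaf y => simp [internalList]
  | node l y r ihl ihr =>
      intro x hx
      simp only [internalList, List.append_assoc, List.mem_append, List.mem_singleton] at hx
      simp only [inorder, List.append_assoc, List.mem_append, List.mem_singleton]
      rcases hx with h | h | h
      · exact Or.inl (ihl x h)
      · exact Or.inr (Or.inl h)
      · exact Or.inr (Or.inr (ihr x h))

lemma internal_leaf_disjoint : ∀ (t : FullBinTree α), (inorder t).Nodup →
    ∀ x, x ∈ internalList t → x ∈ leafList t → False := by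
  intro t
  induction t with
  | leaf y => intro _ x hx; simp [internalList] at hx
  | node l y r ihl ihr =>
      intro hnd x hxi hxl
      obtain ⟨hndl, hndr, hyl, hyr, hdisj⟩ := nodup_node hnd
      simp only [internalList, List.append_assoc, List.mem_append, List.mem_singleton] at hxi
      simp only [leafList, List.mem_append] at hxl
      rcases hxi with h | h | h
      · rcases hxl with h' | h'
        · exact ihl hndl x h h'
        · exact hdisj x (internalList_subset_inorder l x h) (leafList_subset_inorder r x h')
      · subst h
        rcases hxl with h' | h'
        · exact hyl (leafList_subset_inorder l x h')
        · exact hyr (leafList_subset_inorder r x h')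
      · rcases hxl with h' | h'
        · exact hdisj x (leafList_subset_inorder l x h') (internalList_subset_inorder r x h)
        · exact ihr hndr x h h'

lemma valOrdered_of_sub {v : α → ℝ} {s t : FullBinTree α} (h : Sub s t)
    (hv : ValOrdered v t) : ValOrdered v s := by
  induction h with
  | refl => exact hv
  | left x h ih => exact ih hv.2.2.1
  | right x h ih => exact ih hv.2.2.2

lemma le_root_of_valOrdered {v : α → ℝ} :
    ∀ (t : FullBinTree α), ValOrdered v t → ∀ x ∈ inorder t, v x ≤ v (rootLabel t) := by
  intro t
  induction t with
  | leaf y => intro _ x hx; simp [inorder] at hx; subst hx; simp [rootLabel]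
  | node l y r ihl ihr =>
      intro hv x hx
      simp only [inorder, List.append_assoc, List.mem_append, List.mem_singleton] at hx
      simp only [rootLabel]
      rcases hx with h | h | h
      · exact le_of_lt (lt_of_le_of_lt (ihl hv.2.2.1 x h) hv.1)
      · subst h; exact le_refl _
      · exact le_of_lt (lt_of_le_of_lt (ihr hv.2.2.2 x h) hv.2.1)

lemma sub_sub {s1 s2 : FullBinTree α} : ∀ (t : FullBinTree α), Sub s1 t → Sub s2 t →
    (inorder t).Nodup → ∀ y, y ∈ inorder s1 → y ∈ inorder s2 → Sub s1 s2 ∨ Sub s2 s1 := by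
  intro t
  induction t with
  | leaf x =>
      intro h1 h2 _ y _ _
      rw [sub_leaf_iff] at h1 h2
      subst h1; subst h2; exact Or.inl (Sub.refl _)
  | node l x r ihl ihr =>
      intro h1 h2 hnd y hy1 hy2
      obtain ⟨hndl, hndr, hxl, hxr, hdisj⟩ := nodup_node hnd
      rcases sub_node_iff.mp h1 with rfl | h1 | h1
      · exact Or.inr h2
      · rcases sub_node_iff.mp h2 with rfl | h2 | h2
        · exact Or.inl (Sub.left x h1)
        · exact ihl h1 h2 hndl y hy1 hy2
        · exact absurd ((sub_inorder_sublist h2).mem hy2)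
            (fun hc => hdisj y ((sub_inorder_sublist h1).mem hy1) hc)
      · rcases sub_node_iff.mp h2 with rfl | h2 | h2
        · exact Or.inl (Sub.right x h1)
        · exact absurd ((sub_inorder_sublist h1).mem hy1)
            (fun hc => hdisj y ((sub_inorder_sublist h2).mem hy2) hc)
        · exact ihr h1 h2 hndr y hy1 hy2

lemma eq_of_sub_of_rootLabel_eq {s t : FullBinTree α} (h : Sub s t)
    (hnd : (inorder t).Nodup) (hr : rootLabel s = rootLabel t) : s = t := by
  cases h with
  | refl => rfl
  | left x h =>
      exfalso
      obtain ⟨_, _, hxl, _, _⟩ := nodup_node hnd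
      simp only [rootLabel] at hr
      exact hxl ((sub_inorder_sublist h).mem (hr ▸ rootLabel_mem_inorder s))
  | right x h =>
      exfalso
      obtain ⟨_, _, _, hxr, _⟩ := nodup_node hnd
      simp only [rootLabel] at hr
      exact hxr ((sub_inorder_sublist h).mem (hr ▸ rootLabel_mem_inorder s))

lemma sub_eq_of_rootLabel {s1 s2 t : FullBinTree α} (h1 : Sub s1 t) (h2 : Sub s2 t)
    (hnd : (inorder t).Nodup) (hr : rootLabel s1 = rootLabel s2) : s1 = s2 := by
  rcases sub_sub t h1 h2 hnd (rootLabel s1)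
      (rootLabel_mem_inorder s1) (by rw [hr]; exact rootLabel_mem_inorder s2) with h | h
  · exact eq_of_sub_of_rootLabel_eq h ((sub_inorder_sublist h2).nodup hnd) hr
  · exact (eq_of_sub_of_rootLabel_eq h ((sub_inorder_sublist h1).nodup hnd) hr.symm).symm

lemma append_cons_inj {a : α} : ∀ (l1 l2 r1 r2 : List α),
    l1 ++ a :: r1 = l2 ++ a :: r2 → a ∉ l1 → a ∉ l2 → l1 = l2 ∧ r1 = r2 := by
  intro l1
  induction l1 with
  | nil =>
      intro l2 r1 r2 h _ h2
      cases l2 with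
      | nil => simpa using h
      | cons b l2 =>
          simp only [List.nil_append, List.cons_append, List.cons.injEq] at h
          exact absurd (h.1 ▸ List.mem_cons_self (a := b) (l := l2)) h2
  | cons b l1 ih =>
      intro l2 r1 r2 h h1 h2
      cases l2 with
      | nil =>
          simp only [List.nil_append, List.cons_append, List.cons.injEq] at h
          exact absurd (show a ∈ b :: l1 by rw [h.1]; exact List.mem_cons_self) h1
      | cons c l2 =>
          simp only [List.cons_append, List.cons.injEq] at h
          obtain ⟨rfl, h⟩ := h
          have := ih l2 r1 r2 h (fun hm => h1 (List.mem_cons_of_mem _ hm))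
            (fun hm => h2 (List.mem_cons_of_mem _ hm))
          exact ⟨by rw [this.1], this.2⟩

lemma subtreeAt_sub (t : FullBinTree α) (x : α) : Sub (subtreeAt t x) t := by
  induction t with
  | leaf y => exact Sub.refl _
  | node l y r ihl ihr =>
      simp only [subtreeAt]
      split
      · exact Sub.refl _
      · split
        · exact Sub.left _ ihl
        · exact Sub.right _ ihr

lemma find?_congr {p q : α → Bool} : ∀ (L : List α), (∀ b ∈ L, p b = q b) →
    L.find? p = L.find? q := by
  intro L
  induction L with
  | nil => intro _; rfl
  | cons b L ih =>
      intro h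
      rw [List.find?_cons, List.find?_cons, h b List.mem_cons_self]
      cases q b
      · exact ih (fun x hx => h x (List.mem_cons_of_mem _ hx))
      · rfl

lemma tree_unique {v : α → ℝ} : ∀ (t1 t2 : FullBinTree α), inorder t1 = inorder t2 →
    (inorder t1).Nodup → ValOrdered v t1 → ValOrdered v t2 → t1 = t2 := by
  intro t1
  induction t1 with
  | leaf a =>
      intro t2 heq _ _ _
      cases t2 with
      | leaf b => simp only [inorder, List.cons.injEq] at heq; rw [heq.1]
      | node l x r =>
          exfalso
          have := congrArg List.length heq
          simp only [inorder, List.length_append, List.length_singleton, List.length_cons,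
            List.length_nil] at this
          have hl := inorder_length_pos l
          omega
  | node l1 x1 r1 ihl ihr =>
      intro t2 heq hnd hv1 hv2
      cases t2 with
      | leaf b =>
          exfalso
          have := congrArg List.length heq
          simp only [inorder, List.length_append, List.length_singleton, List.length_cons,
            List.length_nil] at this
          have hl := inorder_length_pos l1
          omega
      | node l2 x2 r2 =>
          obtain ⟨hndl, hndr, hxl, hxr, _⟩ := nodup_node hnd
          have hx : x1 = x2 := by
            by_contra hne
            have hx2mem : x2 ∈ inorder (node l1 x1 r1) := by
              rw [heq]
              simp [inorder]
            have hx1mem : x1 ∈ inorder (node l2 x2 r2) := by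
              rw [← heq]; simp [inorder]
            simp only [inorder, List.append_assoc, List.mem_append, List.mem_singleton] at hx2mem hx1mem
            have h21 : v x2 < v x1 := by
              rcases hx2mem with h | h | h
              · exact lt_of_le_of_lt (le_root_of_valOrdered l1 hv1.2.2.1 x2 h) hv1.1
              · exact absurd h.symm hne
              · exact lt_of_le_of_lt (le_root_of_valOrdered r1 hv1.2.2.2 x2 h) hv1.2.1
            have h12 : v x1 < v x2 := by
              rcases hx1mem with h | h | h
              · exact lt_of_le_of_lt (le_root_of_valOrdered l2 hv2.2.2.1 x1 h) hv2.1
              · exact absurd h hne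
              · exact lt_of_le_of_lt (le_root_of_valOrdered r2 hv2.2.2.2 x1 h) hv2.2.1
            linarith
          subst hx
          have heq' : inorder l1 ++ x1 :: inorder r1 = inorder l2 ++ x1 :: inorder r2 := by
            simpa [inorder, List.append_assoc] using heq
          have hndeq : (inorder (node l2 x1 r2)).Nodup := heq ▸ hnd
          obtain ⟨_, _, hxl2, _, _⟩ := nodup_node hndeq
          obtain ⟨hle, hre⟩ := append_cons_inj (inorder l1) (inorder l2) (inorder r1)
            (inorder r2) heq' hxl hxl2
          rw [ihl l2 hle hndl hv1.2.2.1 hv2.2.2.1, ihr r2 hre hndr hv1.2.2.2 hv2.2.2.2]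

lemma eq_of_sub_of_length {s t : FullBinTree α} (h : Sub s t)
    (hl : (inorder t).length ≤ (inorder s).length) : s = t := by
  cases h with
  | refl => rfl
  | left x h =>
      rename_i l' r'
      exfalso
      have h1 := (sub_inorder_sublist h).length_le
      simp only [inorder, List.length_append, List.length_singleton] at hl
      have h3 := inorder_length_pos r'
      omega
  | right x h =>
      rename_i l' r'
      exfalso
      have h1 := (sub_inorder_sublist h).length_le
      simp only [inorder, List.length_append, List.length_singleton] at hl
      have h3 := inorder_length_pos l'
      omega

set_option linter.unusedSectionVars true

end FullBinTree

open FullBinTree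

/-- The piecewise linear map determined by the list `c` (on the domain `[1,m]`). -/
noncomputable def plMap (c : ℕ → ℝ) (x : ℝ) : ℝ :=
  c (Int.floor x).toNat +
    (x - (Int.floor x : ℝ)) * (c ((Int.floor x).toNat + 1) - c (Int.floor x).toNat)

/-- The set of points of the domain `[1,m]` with values in `[A,B]`. -/
def levelBand (m : ℕ) (c : ℕ → ℝ) (A B : ℝ) : Set ℝ :=
  {x : ℝ | x ∈ Set.Icc (1 : ℝ) (m : ℝ) ∧ plMap c x ∈ Set.Icc A B}

/-- The sublevel set of the map at `s`, within the domain `[1,m]`. -/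
def sublevel (m : ℕ) (c : ℕ → ℝ) (s : ℝ) : Set ℝ :=
  {x : ℝ | x ∈ Set.Icc (1 : ℝ) (m : ℝ) ∧ plMap c x ≤ s}

/-- The support of the frame spanned by the items `a` and `b`: the connected component
of `f⁻¹([f a, f b])` (within the domain) containing `a`. -/
def frameSupport (m : ℕ) (c : ℕ → ℝ) (a b : ℕ) : Set ℝ :=
  connectedComponentIn (levelBand m c (c a) (c b)) (a : ℝ)

/-- `W(a,b)` is a triple-panel window of the piecewise linear map of `c`:
`a` and `b` are items with `c a < c b` lying in a common connected component `[x,y]`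
of `f⁻¹([c a, c b])`, and the value at the end of the support away from the mirror
equals `c a`. -/
def IsTPW (m : ℕ) (c : ℕ → ℝ) (a b : ℕ) : Prop :=
  1 ≤ a ∧ a ≤ m ∧ 1 ≤ b ∧ b ≤ m ∧ c a < c b ∧
  (b : ℝ) ∈ frameSupport m c a b ∧
  (if a < b then plMap c (sSup (frameSupport m c a b)) = c a
   else plMap c (sInf (frameSupport m c a b)) = c a)

/-- `i` is an interior local minimum of the list `c`. -/
def IsLocMin (m : ℕ) (c : ℕ → ℝ) (i : ℕ) : Prop :=
  1 < i ∧ i < m ∧ c i < c (i - 1) ∧ c i < c (i + 1)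

/-- `i` is an interior local maximum of the list `c`. -/
def IsLocMax (m : ℕ) (c : ℕ → ℝ) (i : ℕ) : Prop :=
  1 < i ∧ i < m ∧ c (i - 1) < c i ∧ c (i + 1) < c i

/-- `i` is a critical item that is a leaf: an endpoint or an interior local minimum. -/
def IsCritLeaf (m : ℕ) (c : ℕ → ℝ) (i : ℕ) : Prop :=
  i = 1 ∨ i = m ∨ IsLocMin m c i

/-- `i` is a critical item of the list `c`. -/
def IsCritItem (m : ℕ) (c : ℕ → ℝ) (i : ℕ) : Prop :=
  IsCritLeaf m c i ∨ IsLocMax m c i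

/-- `t` is the tree `T(c)`: a full binary tree on the critical items of `c`
satisfying Condition I.1 (the in-order traversal lists the critical items in
increasing order of position) and Condition I.2 (values increase from child to
parent). -/
def IsTreeOf (m : ℕ) (c : ℕ → ℝ) (t : FullBinTree ℕ) : Prop :=
  List.Chain' (· < ·) (FullBinTree.inorder t) ∧
  (∀ i, i ∈ FullBinTree.inorder t ↔ IsCritItem m c i) ∧
  FullBinTree.ValOrdered c t

/-- If the value of an interior local maximum `j` is changed so that
it stays above the values of both children of `j` in `T(c)` and (when `j` is not the
child of the special root, i.e. not the root of `T(c)`) below the value of the parent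
of `j`, then the tree and its Condition-II path decomposition are unchanged. -/
theorem statement7 (m : ℕ) (hm : 2 ≤ m) (c c' : ℕ → ℝ)
    (hgen : Set.InjOn c (Set.Icc 1 m)) (hgen' : Set.InjOn c' (Set.Icc 1 m))
    (h12 : c 1 < c 2) (hlast : c m < c (m - 1))
    (h12' : c' 1 < c' 2) (hlast' : c' m < c' (m - 1))
    (j : ℕ) (hagree : ∀ i, 1 ≤ i → i ≤ m → i ≠ j → c' i = c i)
    (hj : IsLocMax m c j) (hj' : IsLocMax m c' j)
    (t t' : FullBinTree ℕ) (ht : IsTreeOf m c t) (ht' : IsTreeOf m c' t')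
    (l r : FullBinTree ℕ) (hsub : FullBinTree.Sub (FullBinTree.node l j r) t)
    (hgtl : c (FullBinTree.rootLabel l) < c' j)
    (hgtr : c (FullBinTree.rootLabel r) < c' j)
    (hlt : j ≠ FullBinTree.rootLabel t →
      ∀ p, FullBinTree.IsParentOf t p j → c' j < c p) :
    t' = t ∧ ∀ a ∈ FullBinTree.leafList t, FullBinTree.bOf t' c' a = FullBinTree.bOf t c a := by
  obtain ⟨hj1, hj2, hj3, hj4⟩ := hj
  obtain ⟨hj1', hj2', hj3', hj4'⟩ := hj'
  obtain ⟨hch, hmem, hvo⟩ := ht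
  obtain ⟨hch', hmem', hvo'⟩ := ht'
  have hnd : (inorder t).Nodup :=
    (List.isChain_iff_pairwise.mp hch).imp (fun h => ne_of_lt h)
  have hnd' : (inorder t').Nodup :=
    (List.isChain_iff_pairwise.mp hch').imp (fun h => ne_of_lt h)
  have critB : ∀ i, IsCritItem m c i → 1 ≤ i ∧ i ≤ m := by
    rintro i (h | h)
    · rcases h with rfl | rfl | h
      · omega
      · omega
      · obtain ⟨h1, h2, -⟩ := h; omega
    · obtain ⟨h1, h2, -⟩ := h; omega
  have memB : ∀ i ∈ inorder t, 1 ≤ i ∧ i ≤ m := fun i hi => critB i ((hmem i).mp hi)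
  have agree : ∀ i ∈ inorder t, i ≠ j → c' i = c i := fun i hi hij =>
    hagree i (memB i hi).1 (memB i hi).2 hij
  have locmax_iff : ∀ i, IsLocMax m c i ↔ IsLocMax m c' i := by
    intro i
    by_cases hi : 1 < i ∧ i < m
    · obtain ⟨hi1, hi2⟩ := hi
      rcases eq_or_ne i j with rfl | hij
      · exact iff_of_true ⟨hj1, hj2, hj3, hj4⟩ ⟨hj1', hj2', hj3', hj4'⟩
      rcases eq_or_ne (i + 1) j with hij1 | hij1
      · have hi_eq : i = j - 1 := by omega
        refine iff_of_false ?_ ?_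
        · rintro ⟨-, -, -, h4⟩
          rw [hij1, hi_eq] at h4
          linarith [hj3]
        · rintro ⟨-, -, -, h4⟩
          rw [hij1, hi_eq] at h4
          linarith [hj3']
      rcases eq_or_ne i (j + 1) with hij2 | hij2
      · refine iff_of_false ?_ ?_
        · rintro ⟨-, -, h3, -⟩
          rw [hij2] at h3
          simp only [Nat.add_sub_cancel] at h3
          linarith [hj4]
        · rintro ⟨-, -, h3, -⟩
          rw [hij2] at h3
          simp only [Nat.add_sub_cancel] at h3
          linarith [hj4']
      · have e1 : c' (i - 1) = c (i - 1) := hagree _ (by omega) (by omega) (by omega)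
        have e2 : c' i = c i := hagree _ (by omega) (by omega) hij
        have e3 : c' (i + 1) = c (i + 1) := hagree _ (by omega) (by omega) hij1
        unfold IsLocMax
        rw [e1, e2, e3]
    · exact iff_of_false (fun h => hi ⟨h.1, h.2.1⟩) (fun h => hi ⟨h.1, h.2.1⟩)
  have locmin_iff : ∀ i, IsLocMin m c i ↔ IsLocMin m c' i := by
    intro i
    by_cases hi : 1 < i ∧ i < m
    · obtain ⟨hi1, hi2⟩ := hi
      rcases eq_or_ne i j with rfl | hij
      · refine iff_of_false ?_ ?_
        · rintro ⟨-, -, h3, -⟩; linarith [hj3]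
        · rintro ⟨-, -, h3, -⟩; linarith [hj3']
      rcases eq_or_ne (i + 1) j with hij1 | hij1
      · have hi_eq : i = j - 1 := by omega
        have e2 : c' i = c i := hagree _ (by omega) (by omega) hij
        have e1 : c' (i - 1) = c (i - 1) := hagree _ (by omega) (by omega) (by omega)
        constructor
        · rintro ⟨-, -, h3, -⟩
          refine ⟨hi1, hi2, by rw [e2, e1]; exact h3, ?_⟩
          rw [hij1, hi_eq]
          exact hj3'
        · rintro ⟨-, -, h3, -⟩
          refine ⟨hi1, hi2, by rw [← e2, ← e1]; exact h3, ?_⟩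
          rw [hij1, hi_eq]
          exact hj3
      rcases eq_or_ne i (j + 1) with hij2 | hij2
      · have e2 : c' i = c i := hagree _ (by omega) (by omega) hij
        have e3 : c' (i + 1) = c (i + 1) := hagree _ (by omega) (by omega) hij1
        have hi_eq : i - 1 = j := by omega
        constructor
        · rintro ⟨-, -, -, h4⟩
          exact ⟨hi1, hi2, by rw [hi_eq, hij2]; exact hj4', by rw [e2, e3]; exact h4⟩
        · rintro ⟨-, -, -, h4⟩
          exact ⟨hi1, hi2, by rw [hi_eq, hij2]; exact hj4, by rw [← e2, ← e3]; exact h4⟩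
      · have e1 : c' (i - 1) = c (i - 1) := hagree _ (by omega) (by omega) (by omega)
        have e2 : c' i = c i := hagree _ (by omega) (by omega) hij
        have e3 : c' (i + 1) = c (i + 1) := hagree _ (by omega) (by omega) hij1
        unfold IsLocMin
        rw [e1, e2, e3]
    · exact iff_of_false (fun h => hi ⟨h.1, h.2.1⟩) (fun h => hi ⟨h.1, h.2.1⟩)
  have crit_iff : ∀ i, IsCritItem m c i ↔ IsCritItem m c' i := by
    intro i
    unfold IsCritItem IsCritLeaf
    rw [locmax_iff, locmin_iff]
  have hndsub : (inorder (FullBinTree.node l j r)).Nodup := (sub_inorder_sublist hsub).nodup hnd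
  obtain ⟨hndsl, hndsr, hjl, hjr, hdisjlr⟩ := nodup_node hndsub
  have hsubl : Sub l t := Sub.trans'_s7 (Sub.left j (Sub.refl l)) hsub
  have hsubr : Sub r t := Sub.trans'_s7 (Sub.right j (Sub.refl r)) hsub
  have hrl_ne : rootLabel l ≠ j := fun h => hjl (h ▸ rootLabel_mem_inorder l)
  have hmem_l : rootLabel l ∈ inorder t := (sub_inorder_sublist hsubl).mem (rootLabel_mem_inorder l)
  have hvos : ValOrdered c (FullBinTree.node l j r) := valOrdered_of_sub hsub hvo
  have edge : ∀ x z : ℕ, FullBinTree.IsParentOf t x z → c' z < c' x := by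
    rintro x z ⟨l0, r0, hsub0, hz⟩
    have hvo0 : ValOrdered c (FullBinTree.node l0 x r0) := valOrdered_of_sub hsub0 hvo
    have hxmem : x ∈ inorder t := (sub_inorder_sublist hsub0).mem (by simp [inorder])
    obtain ⟨ch, hch_sub_node, hch_root, hcz⟩ :
        ∃ ch, Sub ch (FullBinTree.node l0 x r0) ∧ rootLabel ch = z ∧ c z < c x := by
      rcases hz with hz | hz
      · exact ⟨l0, Sub.left x (Sub.refl l0), hz, hz ▸ hvo0.1⟩
      · exact ⟨r0, Sub.right x (Sub.refl r0), hz, hz ▸ hvo0.2.1⟩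
    have hch_sub : Sub ch t := Sub.trans'_s7 hch_sub_node hsub0
    have hzmem : z ∈ inorder t :=
      hch_root ▸ (sub_inorder_sublist hch_sub).mem (rootLabel_mem_inorder ch)
    have hxz : x ≠ z := fun h => by rw [h] at hcz; exact lt_irrefl _ hcz
    by_cases hzj : z = j
    · have hch_eq : ch = FullBinTree.node l j r :=
        sub_eq_of_rootLabel hch_sub hsub hnd (by rw [hch_root, hzj]; exact rfl)
      have hjroot : j ≠ rootLabel t := by
        intro hjr0
        have ht_eq : t = FullBinTree.node l j r :=
          sub_eq_of_rootLabel (Sub.refl t) hsub hnd (by rw [← hjr0]; exact rfl)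
        rw [ht_eq] at hsub0
        have s1 := (sub_inorder_sublist hsub0).length_le
        have heqt : ch = FullBinTree.node l0 x r0 :=
          eq_of_sub_of_length hch_sub_node (by rw [hch_eq]; exact s1)
        rw [heqt] at hch_root
        exact hxz hch_root
      have hxj : x ≠ j := by rw [← hzj]; exact hxz
      have hcx : c' x = c x := agree x hxmem hxj
      rw [hzj] at hz
      rw [hzj, hcx]
      exact hlt hjroot x ⟨l0, r0, hsub0, hz⟩
    · have hz' : c' z = c z := agree z hzmem hzj
      by_cases hxj : x = j
      · subst hxj
        have hnode : FullBinTree.node l0 x r0 = FullBinTree.node l x r :=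
          sub_eq_of_rootLabel hsub0 hsub hnd (by exact rfl)
        injection hnode with e1 e2 e3
        rw [hz']
        rcases hz with hz | hz
        · rw [← hz, e1]; exact hgtl
        · rw [← hz, e3]; exact hgtr
      · rw [hz', agree x hxmem hxj]
        exact hcz
  have key : ∀ s : FullBinTree ℕ, Sub s t → ValOrdered c' s := by
    intro s
    induction s with
    | leaf y => intro _; trivial
    | node l0 y r0 ihl0 ihr0 =>
        intro hs
        exact ⟨edge y (rootLabel l0) ⟨l0, r0, hs, Or.inl rfl⟩,
          edge y (rootLabel r0) ⟨l0, r0, hs, Or.inr rfl⟩,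
          ihl0 (Sub.trans'_s7 (Sub.left y (Sub.refl l0)) hs),
          ihr0 (Sub.trans'_s7 (Sub.right y (Sub.refl r0)) hs)⟩
  have hvo'' : ValOrdered c' t := key t (Sub.refl t)
  have hmem_eq : ∀ i, i ∈ inorder t' ↔ i ∈ inorder t := by
    intro i
    rw [hmem i, hmem' i, crit_iff i]
  have hio : inorder t' = inorder t := by
    haveI : IsAntisymm ℕ (· < ·) := ⟨fun a b h1 h2 => absurd h2 (lt_asymm h1)⟩
    have s1 : List.Pairwise (· < ·) (inorder t') := List.isChain_iff_pairwise.mp hch'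
    have s2 : List.Pairwise (· < ·) (inorder t) := List.isChain_iff_pairwise.mp hch
    exact List.Perm.eq_of_pairwise (fun a _ b _ h1 h2 => absurd h2 (lt_asymm h1)) s1 s2 ((List.perm_ext_iff_of_nodup hnd' hnd).mpr hmem_eq)
  have hteq : t' = t := tree_unique t' t hio hnd' hvo' hvo''
  refine ⟨hteq, ?_⟩
  intro a ha
  rw [hteq]
  have haio : a ∈ inorder t := leafList_subset_inorder t a ha
  have haj : a ≠ j := fun h =>
    internal_leaf_disjoint t hnd j (mem_internal_of_sub hsub l j r rfl) (h ▸ ha)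
  have hca : c' a = c a := agree a haio haj
  have hcrl : c' (rootLabel l) = c (rootLabel l) := agree _ hmem_l hrl_ne
  have hrlj : c (rootLabel l) < c j := hvos.1
  have any_eq : ∀ s : FullBinTree ℕ, Sub s t →
      ((inorder s).any (fun u => decide (c' u < c' a)) =
        (inorder s).any (fun u => decide (c u < c a))) := by
    intro s hs
    rw [Bool.eq_iff_iff]
    simp only [List.any_eq_true, decide_eq_true_eq]
    have hsubl_s : j ∈ inorder s → Sub (FullBinTree.node l j r) s := by
      intro hjs
      rcases sub_sub t hs hsub hnd j hjs (by simp [inorder]) with h | h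
      · rcases sub_node_iff.mp h with rfl | h | h
        · exact Sub.refl _
        · exact absurd ((sub_inorder_sublist h).mem hjs) hjl
        · exact absurd ((sub_inorder_sublist h).mem hjs) hjr
      · exact h
    have hrl_mem : ∀ hn : Sub (FullBinTree.node l j r) s, rootLabel l ∈ inorder s := by
      intro hn
      refine (sub_inorder_sublist hn).mem ?_
      simp only [inorder, List.append_assoc, List.mem_append]
      exact Or.inl (rootLabel_mem_inorder l)
    constructor
    · rintro ⟨u, hu, hlt'⟩
      rw [hca] at hlt'
      by_cases huj : u = j
      · subst huj
        refine ⟨rootLabel l, hrl_mem (hsubl_s hu), lt_trans hgtl hlt'⟩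
      · have he : c' u = c u := agree u ((sub_inorder_sublist hs).mem hu) huj
        exact ⟨u, hu, by rw [← he]; exact hlt'⟩
    · rintro ⟨u, hu, hlt'⟩
      rw [hca]
      by_cases huj : u = j
      · subst huj
        refine ⟨rootLabel l, hrl_mem (hsubl_s hu), by rw [hcrl]; exact lt_trans hrlj hlt'⟩
      · have he : c' u = c u := agree u ((sub_inorder_sublist hs).mem hu) huj
        exact ⟨u, hu, by rw [he]; exact hlt'⟩
  unfold FullBinTree.bOf
  exact find?_congr _ (fun b _ => any_eq _ (subtreeAt_sub t b))
end
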